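/- arXiv:1708.01458 — 3 statements merged into one kernel-verified Lean document; each statement's English description precedes it below -/
import Mathlib

section
/- Let μ be a finite Radon measure on ℝⁿ, x ∈ ℝⁿ, m ≥ 0, and suppose the rescaled measures r⁻ᵐ μ_{x,r} (where μ_{x,r}(A) = μ(x + rA)) converge weakly-* in the space of Radon measures (tested against continuous compactly supported functions) to a Radon measure ν as r ↓ 0, and suppose there is a constant C with |μ|(B(x,lr)) ≤ C (lr)ᵐ for all l ∈ ℕ and small r. Then r⁻ᵐ μ_{x,r} → ν also in the space of tempered distributions, i.e. tested against all Schwartz functions. -/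
/-!
For `s > m + 1` the ball bounds `σ (B(0, j + 1)) ≤ C (j + 1) ^ m` give
`∫ (1 + ‖y‖) ^ (-s) dσ ≤ C ∑ⱼ (j + 1) ^ (m - s) < ∞`, uniformly over the rescaled measures
`r⁻ᵐ μ_{x,r}` with `r` small; testing the weak-* convergence against bumps shows that `ν` obeys
the same ball bounds up to the factor `2 ^ m`. A Schwartz function `f` is bounded by
`K (1 + ‖y‖) ^ (-(s + 1))`, so replacing it by `f φ`, with `φ` a bump equal to `1` on `B(0, L)`,
changes its integral against any of these measures by at most `K / (1 + L)` times the uniform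
bound on `∫ (1 + ‖y‖) ^ (-s)`. Since `f φ` is continuous with compact support, an `ε / 3`
argument concludes.
-/

open MeasureTheory Filter Metric Topology
open scoped ENNReal

/-- Blow-up of a measure: `μ_{x,r}(A) = μ(x + r A)`, realized as the pushforward of `μ`
under `y ↦ r⁻¹ • (y - x)`. -/
noncomputable def blowUp {n : ℕ} (μ : Measure (EuclideanSpace ℝ (Fin n)))
    (x : EuclideanSpace ℝ (Fin n)) (r : ℝ) : Measure (EuclideanSpace ℝ (Fin n)) :=
  Measure.map (fun y => r⁻¹ • (y - x)) μ

section Weights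

variable {E : Type*} [NormedAddCommGroup E]

theorem SchwartzMap.exists_norm_le_mul_one_add_norm_rpow_neg {F : Type*} [NormedSpace ℝ E]
    [NormedAddCommGroup F] [NormedSpace ℝ F] (f : SchwartzMap E F) (s : ℝ) :
    ∃ K, ∀ y, ‖f y‖ ≤ K * (1 + ‖y‖) ^ (-s) := by
  set k := ⌈s⌉₊
  refine ⟨2 ^ k * (Finset.Iic (k, 0)).sup (fun m ↦ SchwartzMap.seminorm ℝ m.1 m.2) f, fun y ↦ ?_⟩
  have hy : 1 ≤ 1 + ‖y‖ := le_add_of_nonneg_right (norm_nonneg y)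
  refine le_trans ?_ (mul_le_mul_of_nonneg_left (Real.rpow_le_rpow_of_exponent_le hy
    (neg_le_neg (Nat.le_ceil s))) (by positivity))
  rw [Real.rpow_neg (by positivity), ← div_eq_mul_inv, le_div_iff₀ (by positivity),
    Real.rpow_natCast, mul_comm]
  simpa using one_add_le_sup_seminorm_apply (𝕜 := ℝ) (m := (k, 0)) le_rfl le_rfl f y

theorem norm_sub_mul_contDiffBump_le [NormedSpace ℝ E] [HasContDiffBump E] {f : E → ℝ}
    {K s : ℝ} (hfK : ∀ y, ‖f y‖ ≤ K * (1 + ‖y‖) ^ (-(s + 1))) (φ : ContDiffBump (0 : E))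
    (y : E) : ‖f y - f y * φ y‖ ≤ K / (1 + φ.rIn) * (1 + ‖y‖) ^ (-s) := by
  have hK : 0 ≤ K := by simpa using (norm_nonneg _).trans (hfK 0)
  have := φ.rIn_pos
  rcases le_or_gt ‖y‖ φ.rIn with hy | hy
  · rw [φ.one_of_mem_closedBall (by simpa using hy)]
    simp only [mul_one, sub_self, norm_zero]
    positivity
  have hpos : 0 < 1 + ‖y‖ := by positivity
  calc ‖f y - f y * φ y‖ = ‖f y‖ * |1 - φ y| := by
        rw [← mul_one_sub, norm_mul, Real.norm_eq_abs (1 - _)]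
    _ ≤ K * (1 + ‖y‖) ^ (-(s + 1)) * 1 := by
        gcongr
        · exact hfK y
        · exact abs_le.2 ⟨by linarith [φ.le_one (x := y)], by linarith [φ.nonneg (x := y)]⟩
    _ = K / (1 + ‖y‖) * (1 + ‖y‖) ^ (-s) := by
        rw [neg_add, Real.rpow_add hpos, Real.rpow_neg_one]
        ring
    _ ≤ K / (1 + φ.rIn) * (1 + ‖y‖) ^ (-s) := by gcongr

variable [MeasurableSpace E]

theorem lintegral_ofReal_one_add_norm_rpow_neg_le_tsum [OpensMeasurableSpace E]
    {σ : Measure E} {C m s : ℝ} (hs : 0 ≤ s)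
    (hσ : ∀ j : ℕ, σ (closedBall 0 (j + 1)) ≤ ENNReal.ofReal (C * ((j : ℝ) + 1) ^ m)) :
    ∫⁻ y, ENNReal.ofReal ((1 + ‖y‖) ^ (-s)) ∂σ ≤
      ∑' j : ℕ, ENNReal.ofReal (C * ((j : ℝ) + 1) ^ (m - s)) := by
  have hpt : ∀ y : E, ENNReal.ofReal ((1 + ‖y‖) ^ (-s)) ≤ ∑' j : ℕ,
      (closedBall (0 : E) (j + 1)).indicator (fun _ ↦ ENNReal.ofReal (((j : ℝ) + 1) ^ (-s))) y := by
    intro y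
    refine le_trans ?_ (ENNReal.le_tsum ⌊‖y‖⌋₊)
    have hy : ‖y‖ < ⌊‖y‖⌋₊ + 1 := Nat.lt_floor_add_one _
    rw [Set.indicator_of_mem (by simpa using hy.le)]
    have hfloor : (⌊‖y‖⌋₊ : ℝ) + 1 ≤ 1 + ‖y‖ := by linarith [Nat.floor_le (norm_nonneg y)]
    exact ENNReal.ofReal_le_ofReal
      (Real.rpow_le_rpow_of_nonpos (by positivity) hfloor (neg_nonpos.2 hs))
  calc ∫⁻ y, ENNReal.ofReal ((1 + ‖y‖) ^ (-s)) ∂σ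
      ≤ ∑' j : ℕ, ENNReal.ofReal (((j : ℝ) + 1) ^ (-s)) * σ (closedBall 0 (j + 1)) := by
        refine (lintegral_mono hpt).trans_eq ?_
        rw [lintegral_tsum fun j ↦
          (measurable_const.indicator measurableSet_closedBall).aemeasurable]
        simp only [lintegral_indicator_const measurableSet_closedBall]
    _ ≤ ∑' j : ℕ, ENNReal.ofReal (((j : ℝ) + 1) ^ (-s)) *
          ENNReal.ofReal (C * ((j : ℝ) + 1) ^ m) :=
        ENNReal.tsum_le_tsum fun j ↦ by gcongr; exact hσ j
    _ = ∑' j : ℕ, ENNReal.ofReal (C * ((j : ℝ) + 1) ^ (m - s)) := by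
        congr 1 with j
        rw [← ENNReal.ofReal_mul (by positivity), sub_eq_add_neg, Real.rpow_add (by positivity)]
        ring_nf

theorem integrable_one_add_norm_rpow_neg_and_integral_le [OpensMeasurableSpace E]
    {σ : Measure E} {C m s : ℝ} (hC : 0 ≤ C) (hs : 0 ≤ s) (hms : m + 1 < s)
    (hσ : ∀ j : ℕ, σ (closedBall 0 (j + 1)) ≤ ENNReal.ofReal (C * ((j : ℝ) + 1) ^ m)) :
    Integrable (fun y ↦ (1 + ‖y‖) ^ (-s)) σ ∧
      ∫ y, (1 + ‖y‖) ^ (-s) ∂σ ≤ C * ∑' j : ℕ, ((j : ℝ) + 1) ^ (m - s) := by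
  have hsum : Summable fun j : ℕ ↦ ((j : ℝ) + 1) ^ (m - s) := by
    simpa using (summable_nat_add_iff 1).2 (Real.summable_nat_rpow.2 (by linarith))
  have hlin : ∫⁻ y, ENNReal.ofReal ((1 + ‖y‖) ^ (-s)) ∂σ ≤
      ENNReal.ofReal (C * ∑' j : ℕ, ((j : ℝ) + 1) ^ (m - s)) := by
    rw [← tsum_mul_left, ENNReal.ofReal_tsum_of_nonneg (fun j ↦ by positivity) (hsum.mul_left C)]
    exact lintegral_ofReal_one_add_norm_rpow_neg_le_tsum hs hσ
  have hnonneg : 0 ≤ᵐ[σ] fun y ↦ (1 + ‖y‖) ^ (-s) := ae_of_all _ fun y ↦ by positivity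
  have hmeas : AEStronglyMeasurable (fun y ↦ (1 + ‖y‖) ^ (-s)) σ :=
    ((continuous_const.add continuous_norm).rpow_const fun y ↦
      Or.inl (add_pos_of_pos_of_nonneg one_pos (norm_nonneg y)).ne').aestronglyMeasurable
  refine ⟨⟨hmeas, (hasFiniteIntegral_iff_ofReal hnonneg).2 (hlin.trans_lt ENNReal.ofReal_lt_top)⟩,
    ?_⟩
  rw [integral_eq_lintegral_of_nonneg_ae hnonneg hmeas]
  exact ENNReal.toReal_le_of_le_ofReal (by positivity) hlin

theorem abs_integral_sub_integral_mul_contDiffBump_le [NormedSpace ℝ E] [HasContDiffBump E]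
    [OpensMeasurableSpace E] {σ : Measure E} {f : E → ℝ} (hf : Continuous f) {K s B : ℝ}
    (hfK : ∀ y, ‖f y‖ ≤ K * (1 + ‖y‖) ^ (-(s + 1)))
    (hw : Integrable (fun y ↦ (1 + ‖y‖) ^ (-s)) σ) (hB : ∫ y, (1 + ‖y‖) ^ (-s) ∂σ ≤ B)
    (φ : ContDiffBump (0 : E)) :
    |∫ y, f y ∂σ - ∫ y, f y * φ y ∂σ| ≤ K / (1 + φ.rIn) * B := by
  have hK : 0 ≤ K := by simpa using (norm_nonneg _).trans (hfK 0)
  have hfw : ∀ y, ‖f y‖ ≤ K * (1 + ‖y‖) ^ (-s) := fun y ↦ (hfK y).trans <| by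
    gcongr
    · exact le_add_of_nonneg_right (norm_nonneg y)
    · linarith
  have hfint : Integrable f σ :=
    (hw.const_mul K).mono' hf.aestronglyMeasurable (ae_of_all _ hfw)
  have hfφint : Integrable (fun y ↦ f y * φ y) σ :=
    hfint.mul_bdd φ.continuous.aestronglyMeasurable
      (ae_of_all _ fun y ↦ by simpa [abs_of_nonneg φ.nonneg] using φ.le_one)
  rw [← integral_sub hfint hfφint, ← Real.norm_eq_abs]
  calc ‖∫ y, f y - f y * φ y ∂σ‖ ≤ ∫ y, K / (1 + φ.rIn) * (1 + ‖y‖) ^ (-s) ∂σ :=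
        norm_integral_le_of_norm_le (hw.const_mul _)
          (ae_of_all _ (norm_sub_mul_contDiffBump_le hfK φ))
    _ ≤ K / (1 + φ.rIn) * B := by
        rw [integral_const_mul]
        have := φ.rIn_pos
        gcongr

variable [NormedSpace ℝ E] [FiniteDimensional ℝ E] [BorelSpace E]
  {ι : Type*} {l : Filter ι} {σ : ι → Measure E} {ν : Measure E}

theorem tendsto_integral_of_norm_le_mul_one_add_norm_rpow_neg {f : E → ℝ} (hf : Continuous f)
    {K s B : ℝ} (hfK : ∀ y, ‖f y‖ ≤ K * (1 + ‖y‖) ^ (-(s + 1)))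
    (hconv : ∀ g : C(E, ℝ), HasCompactSupport g →
      Tendsto (fun i ↦ ∫ y, g y ∂σ i) l (𝓝 (∫ y, g y ∂ν)))
    (hσ : ∀ᶠ i in l, Integrable (fun y ↦ (1 + ‖y‖) ^ (-s)) (σ i) ∧
      ∫ y, (1 + ‖y‖) ^ (-s) ∂σ i ≤ B)
    (hwν : Integrable (fun y ↦ (1 + ‖y‖) ^ (-s)) ν) (hBν : ∫ y, (1 + ‖y‖) ^ (-s) ∂ν ≤ B) :
    Tendsto (fun i ↦ ∫ y, f y ∂σ i) l (𝓝 (∫ y, f y ∂ν)) := by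
  rw [Metric.tendsto_nhds]
  intro ε hε
  have htail : Tendsto (fun L : ℝ ↦ K / (1 + L) * B) atTop (𝓝 0) := by
    simpa using (tendsto_const_nhds.div_atTop
      (tendsto_atTop_add_const_left _ 1 tendsto_id)).mul_const B
  obtain ⟨L, hLε, hL⟩ := ((htail.eventually (gt_mem_nhds (by positivity : 0 < ε / 3))).and
    (eventually_gt_atTop 0)).exists
  let φ : ContDiffBump (0 : E) := ⟨L, L + 1, hL, by linarith⟩
  let g : C(E, ℝ) := ⟨fun y ↦ f y * φ y, hf.mul φ.continuous⟩
  filter_upwards [Metric.tendsto_nhds.1 (hconv g φ.hasCompactSupport.mul_left) (ε / 3)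
    (by positivity), hσ] with i hgi ⟨hwi, hBi⟩
  have hσi : |∫ y, f y ∂σ i - ∫ y, f y * φ y ∂σ i| < ε / 3 :=
    (abs_integral_sub_integral_mul_contDiffBump_le hf hfK hwi hBi φ).trans_lt hLε
  have hνi : |∫ y, f y ∂ν - ∫ y, f y * φ y ∂ν| < ε / 3 :=
    (abs_integral_sub_integral_mul_contDiffBump_le hf hfK hwν hBν φ).trans_lt hLε
  replace hgi : |∫ y, f y * φ y ∂σ i - ∫ y, f y * φ y ∂ν| < ε / 3 := hgi
  rw [Real.dist_eq]
  linarith [abs_sub_le (∫ y, f y ∂σ i) (∫ y, f y * φ y ∂σ i) (∫ y, f y ∂ν),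
    abs_sub_le (∫ y, f y * φ y ∂σ i) (∫ y, f y * φ y ∂ν) (∫ y, f y ∂ν),
    abs_sub_comm (∫ y, f y ∂ν) (∫ y, f y * φ y ∂ν)]

variable [l.NeBot] [IsLocallyFiniteMeasure ν]

theorem measure_closedBall_le_of_tendsto_integral
    (hconv : ∀ g : C(E, ℝ), HasCompactSupport g →
      Tendsto (fun i ↦ ∫ y, g y ∂σ i) l (𝓝 (∫ y, g y ∂ν)))
    {R R' b : ℝ} (hR : 0 < R) (hRR' : R < R')
    (hσ : ∀ᶠ i in l, σ i (closedBall 0 R') ≤ ENNReal.ofReal b) :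
    ν (closedBall 0 R) ≤ ENNReal.ofReal b := by
  let φ : ContDiffBump (0 : E) := ⟨R, R', hR, hRR'⟩
  have hφsupp : ∀ y ∈ (closedBall (0 : E) R')ᶜ, φ y ≤ 0 := fun y hy ↦
    (φ.zero_of_le_dist (not_le.1 (mt mem_closedBall.2 hy)).le).le
  have hlim := (ENNReal.continuous_ofReal.tendsto _).comp
    (hconv ⟨φ, φ.continuous⟩ φ.hasCompactSupport)
  calc ν (closedBall 0 R) ≤ ENNReal.ofReal (∫ y, φ y ∂ν) :=
        (φ.continuous.integrable_of_hasCompactSupport φ.hasCompactSupport).measure_le_integral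
          (ae_of_all _ fun _ ↦ φ.nonneg) fun y hy ↦ (φ.one_of_mem_closedBall hy).ge
    _ ≤ ENNReal.ofReal b := le_of_tendsto hlim <| hσ.mono fun i hi ↦
        (integral_le_measure (fun _ _ ↦ φ.le_one) hφsupp).trans hi

theorem measure_closedBall_natCast_add_one_le_of_tendsto_integral {C m : ℝ}
    (hC : 0 ≤ C) (hm : 0 ≤ m)
    (hconv : ∀ g : C(E, ℝ), HasCompactSupport g →
      Tendsto (fun i ↦ ∫ y, g y ∂σ i) l (𝓝 (∫ y, g y ∂ν)))
    (hσ : ∀ᶠ i in l, ∀ j : ℕ,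
      σ i (closedBall 0 (j + 1)) ≤ ENNReal.ofReal (C * ((j : ℝ) + 1) ^ m)) (j : ℕ) :
    ν (closedBall 0 (j + 1)) ≤ ENNReal.ofReal (2 ^ m * C * ((j : ℝ) + 1) ^ m) := by
  refine measure_closedBall_le_of_tendsto_integral hconv (R' := j + 2) (by positivity)
    (by linarith) (hσ.mono fun i hi ↦ ?_)
  calc σ i (closedBall 0 ((j : ℝ) + 2)) ≤ ENNReal.ofReal (C * ((j : ℝ) + 2) ^ m) := by
        simpa [add_assoc, one_add_one_eq_two] using hi (j + 1)
    _ ≤ ENNReal.ofReal (2 ^ m * C * ((j : ℝ) + 1) ^ m) := by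
        refine ENNReal.ofReal_le_ofReal ?_
        rw [mul_comm (2 ^ m) C, mul_assoc, ← Real.mul_rpow zero_le_two (by positivity)]
        gcongr
        linarith

theorem tendsto_integral_schwartzMap_of_tendsto_integral_hasCompactSupport {C m : ℝ}
    (hC : 0 ≤ C) (hm : 0 ≤ m)
    (hconv : ∀ g : C(E, ℝ), HasCompactSupport g →
      Tendsto (fun i ↦ ∫ y, g y ∂σ i) l (𝓝 (∫ y, g y ∂ν)))
    (hσ : ∀ᶠ i in l, ∀ j : ℕ,
      σ i (closedBall 0 (j + 1)) ≤ ENNReal.ofReal (C * ((j : ℝ) + 1) ^ m))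
    (f : SchwartzMap E ℝ) :
    Tendsto (fun i ↦ ∫ y, f y ∂σ i) l (𝓝 (∫ y, f y ∂ν)) := by
  have hC' : 0 ≤ 2 ^ m * C := by positivity
  have hσ' : ∀ᶠ i in l, ∀ j : ℕ,
      σ i (closedBall 0 (j + 1)) ≤ ENNReal.ofReal (2 ^ m * C * ((j : ℝ) + 1) ^ m) :=
    hσ.mono fun i hi j ↦ (hi j).trans <| ENNReal.ofReal_le_ofReal <| by
      gcongr
      exact le_mul_of_one_le_left hC (Real.one_le_rpow one_le_two hm)
  have hms : m + 1 < m + 2 := by linarith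
  obtain ⟨K, hfK⟩ := f.exists_norm_le_mul_one_add_norm_rpow_neg (m + 2 + 1)
  obtain ⟨hwν, hBν⟩ := integrable_one_add_norm_rpow_neg_and_integral_le hC' (by positivity) hms
    (measure_closedBall_natCast_add_one_le_of_tendsto_integral hC hm hconv hσ)
  exact tendsto_integral_of_norm_le_mul_one_add_norm_rpow_neg f.continuous hfK hconv
    (hσ'.mono fun i hi ↦ integrable_one_add_norm_rpow_neg_and_integral_le hC' (by positivity)
      hms hi) hwν hBν

end Weights

theorem blowUp_apply_closedBall {n : ℕ} (μ : Measure (EuclideanSpace ℝ (Fin n)))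
    (x : EuclideanSpace ℝ (Fin n)) {r : ℝ} (hr : 0 < r) (R : ℝ) :
    blowUp μ x r (closedBall 0 R) = μ (closedBall x (R * r)) := by
  rw [blowUp, Measure.map_apply (by fun_prop) measurableSet_closedBall]
  congr 1 with y
  simp only [Set.mem_preimage, mem_closedBall, dist_eq_norm, sub_zero, norm_smul, norm_inv,
    Real.norm_of_nonneg hr.le]
  rw [inv_mul_le_iff₀ hr, mul_comm]

theorem smul_blowUp_apply_closedBall_le {n : ℕ} {μ : Measure (EuclideanSpace ℝ (Fin n))}
    {x : EuclideanSpace ℝ (Fin n)} {r : ℝ} (hr : 0 < r) {C m R : ℝ} (hR : 0 ≤ R)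
    (hμ : μ (closedBall x (R * r)) ≤ ENNReal.ofReal (C * (R * r) ^ m)) :
    (ENNReal.ofReal (r ^ (-m)) • blowUp μ x r) (closedBall 0 R) ≤
      ENNReal.ofReal (C * R ^ m) := by
  rw [Measure.smul_apply, blowUp_apply_closedBall μ x hr, smul_eq_mul]
  calc ENNReal.ofReal (r ^ (-m)) * μ (closedBall x (R * r))
      ≤ ENNReal.ofReal (r ^ (-m)) * ENNReal.ofReal (C * (R * r) ^ m) := by gcongr
    _ = ENNReal.ofReal (C * R ^ m) := by
        rw [← ENNReal.ofReal_mul (by positivity), Real.mul_rpow hR hr.le, Real.rpow_neg hr.le]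
        field_simp

theorem blowUp_tendsto_schwartz_general {n : ℕ} (μ ν : Measure (EuclideanSpace ℝ (Fin n)))
    [IsLocallyFiniteMeasure ν]
    (x : EuclideanSpace ℝ (Fin n)) (m : ℝ) (hm : 0 ≤ m)
    (hconv : ∀ f : C(EuclideanSpace ℝ (Fin n), ℝ), HasCompactSupport f →
      Tendsto (fun r : ℝ => ∫ y, f y ∂(ENNReal.ofReal (r ^ (-m)) • blowUp μ x r))
        (𝓝[>] 0) (𝓝 (∫ y, f y ∂ν)))
    (hgrowth : ∃ C : ℝ, ∃ r₀ > (0:ℝ), ∀ l : ℕ, ∀ r ∈ Set.Ioo (0:ℝ) r₀,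
      μ (closedBall x ((l : ℝ) * r)) ≤ ENNReal.ofReal (C * ((l : ℝ) * r) ^ m)) :
    ∀ f : SchwartzMap (EuclideanSpace ℝ (Fin n)) ℝ,
      Tendsto (fun r : ℝ => ∫ y, f y ∂(ENNReal.ofReal (r ^ (-m)) • blowUp μ x r))
        (𝓝[>] 0) (𝓝 (∫ y, f y ∂ν)) := by
  obtain ⟨C, r₀, hr₀, hμ⟩ := hgrowth
  refine tendsto_integral_schwartzMap_of_tendsto_integral_hasCompactSupport
    (le_max_right C 0) hm hconv ?_
  filter_upwards [Ioo_mem_nhdsGT hr₀] with r hr j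
  have hμj := (hμ (j + 1) r hr).trans <| ENNReal.ofReal_le_ofReal <|
    mul_le_mul_of_nonneg_right (le_max_left C 0) (by have := hr.1; positivity)
  exact_mod_cast smul_blowUp_apply_closedBall_le hr.1 (by positivity) hμj

/-- If the normalized blow-ups `r⁻ᵐ μ_{x,r}` of a finite measure `μ` converge to `ν`
weak-* against continuous compactly supported functions, and `|μ|(B(x, l r)) ≤ C (l r)ᵐ`
for all `l ∈ ℕ` and small `r`, then the convergence also holds against all Schwartz
functions, i.e. in the space of tempered distributions. -/
theorem blowUp_tendsto_schwartz {n : ℕ} (μ ν : Measure (EuclideanSpace ℝ (Fin n)))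
    [IsFiniteMeasure μ] [IsLocallyFiniteMeasure ν]
    (x : EuclideanSpace ℝ (Fin n)) (m : ℝ) (hm : 0 ≤ m)
    (hconv : ∀ f : C(EuclideanSpace ℝ (Fin n), ℝ), HasCompactSupport f →
      Tendsto (fun r : ℝ => ∫ y, f y ∂(ENNReal.ofReal (r ^ (-m)) • blowUp μ x r))
        (𝓝[>] 0) (𝓝 (∫ y, f y ∂ν)))
    (hgrowth : ∃ C : ℝ, ∃ r₀ > (0:ℝ), ∀ l : ℕ, ∀ r ∈ Set.Ioo (0:ℝ) r₀,
      μ (closedBall x ((l : ℝ) * r)) ≤ ENNReal.ofReal (C * ((l : ℝ) * r) ^ m)) :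
    ∀ f : SchwartzMap (EuclideanSpace ℝ (Fin n)) ℝ,
      Tendsto (fun r : ℝ => ∫ y, f y ∂(ENNReal.ofReal (r ^ (-m)) • blowUp μ x r))
        (𝓝[>] 0) (𝓝 (∫ y, f y ∂ν)) :=
  blowUp_tendsto_schwartz_general μ ν x m hm hconv hgrowth
end

section
/- Let F, G ⊂ ℝⁿ with F Borel and G compact. Then dim_H(F + G) ≤ dim_H(F) + dim_M(G), where dim_M denotes the upper Minkowski (box-counting) dimension. -/
/-!
Cover `F` by sets `Uᵢ` with `∑ diam(Uᵢ)^s` small and cover `G` by `N(δᵢ) ≤ δᵢ^(-t)` balls of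
radius `δᵢ ≥ diam Uᵢ`. Then `Uᵢ + G` is covered by `N(δᵢ)` sets of diameter `≤ 3δᵢ`, contributing
at most `δᵢ^(-t) (3δᵢ)^(s+t) = 3^(s+t) δᵢ^s`, so `μH[s] F = 0` forces `μH[s+t] (F + G) = 0`
for every `t > dim_M G`. Since `upperMinkDim` is a limsup in `ℝ`, it only controls the covering
numbers once the ratio `log N(δ) / log(1/δ)` is bounded; in finite dimension this follows from
the volume bound `N(δ) ≤ (C/δ)^n`.
-/

open Filter Topology
open scoped ENNReal Pointwise

/-- Covering number: the least cardinality of a finite set of centers of `δ`-balls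
covering `G`. -/
noncomputable def covNum {X : Type*} [PseudoMetricSpace X] (G : Set X) (δ : ℝ) : ℕ∞ :=
  sInf {N : ℕ∞ | ∃ s : Finset X, (s.card : ℕ∞) = N ∧ G ⊆ ⋃ x ∈ s, Metric.ball x δ}

/-- Upper Minkowski (box-counting) dimension of a set. -/
noncomputable def upperMinkDim {X : Type*} [PseudoMetricSpace X] (G : Set X) : ℝ :=
  limsup (fun δ : ℝ => Real.log ((covNum G δ).toNat) / Real.log (1 / δ)) (𝓝[>] 0)

open MeasureTheory Metric Set
open scoped NNReal

section HausdorffNull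

variable {X : Type*} [EMetricSpace X] [MeasurableSpace X] [BorelSpace X]

theorem exists_cover_tsum_ediam_rpow_lt_of_hausdorffMeasure_eq_zero {d : ℝ} (hd : 0 < d)
    {S : Set X} (hS : μH[d] S = 0) {r ε : ℝ≥0∞} (hr : 0 < r) (hε : 0 < ε) :
    ∃ U : ℕ → Set X, S ⊆ ⋃ i, U i ∧ (∀ i, ediam (U i) ≤ r) ∧ ∑' i, ediam (U i) ^ d < ε := by
  have h : (⨅ (U : ℕ → Set X) (_ : S ⊆ ⋃ i, U i) (_ : ∀ i, ediam (U i) ≤ r),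
      ∑' i, ⨆ _ : (U i).Nonempty, ediam (U i) ^ d) < ε := by
    refine lt_of_le_of_lt ?_ hε
    rw [← hS, Measure.hausdorffMeasure_apply]
    exact le_iSup₂_of_le r hr le_rfl
  simp only [iInf_lt_iff] at h
  obtain ⟨U, hSU, hUr, hsum⟩ := h
  refine ⟨U, hSU, hUr, lt_of_le_of_lt (ENNReal.tsum_le_tsum fun i => ?_) hsum⟩
  rcases (U i).eq_empty_or_nonempty with hU | hU
  · simp [hU, hd]
  · exact le_iSup_of_le hU le_rfl

theorem hausdorffMeasure_eq_zero_of_forall_countable_cover {d : ℝ} {S : Set X} {C : ℝ≥0∞}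
    (hC : C ≠ ∞) (h : ∀ ε : ℝ≥0∞, 0 < ε → ∃ 𝒱 : Set (Set X), 𝒱.Countable ∧ S ⊆ ⋃₀ 𝒱 ∧
      (∀ V ∈ 𝒱, ediam V ≤ ε) ∧ ∑' V : 𝒱, ediam (V : Set X) ^ d ≤ C * ε) :
    μH[d] S = 0 := by
  choose 𝒱 h𝒱 hS h𝒱ε hsum using fun n : ℕ => h (n : ℝ≥0∞)⁻¹ (by simp)
  have : ∀ n, Countable (𝒱 n) := fun n => (h𝒱 n).to_subtype
  have hlim : Tendsto (fun n : ℕ => C * (n : ℝ≥0∞)⁻¹) atTop (𝓝 0) := by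
    simpa using ENNReal.Tendsto.const_mul ENNReal.tendsto_inv_nat_nhds_zero (Or.inr hC)
  refine le_antisymm ?_ zero_le
  calc μH[d] S ≤ liminf (fun n => ∑' V : 𝒱 n, ediam (V : Set X) ^ d) atTop :=
        Measure.hausdorffMeasure_le_liminf_tsum d S _ ENNReal.tendsto_inv_nat_nhds_zero
          (fun n (V : 𝒱 n) => (V : Set X)) (Eventually.of_forall fun n V => h𝒱ε n V V.2)
          (Eventually.of_forall fun n => by simpa [sUnion_eq_iUnion] using hS n)
    _ ≤ liminf (fun n : ℕ => C * (n : ℝ≥0∞)⁻¹) atTop := liminf_le_liminf (.of_forall hsum)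
    _ = 0 := hlim.liminf_eq

end HausdorffNull

theorem exists_pos_le_tsum_ofReal_rpow_lt {s ρ : ℝ} (hs : 0 < s) (hρ : 0 < ρ) {ε : ℝ≥0∞}
    (hε : ε ≠ 0) :
    ∃ η : ℕ → ℝ, (∀ i, 0 < η i ∧ η i ≤ ρ) ∧ ∑' i, ENNReal.ofReal (η i) ^ s < ε := by
  obtain ⟨ε', hε'0, hε'⟩ := ENNReal.exists_pos_sum_of_countable hε ℕ
  refine ⟨fun i => min ((ε' i : ℝ) ^ s⁻¹) ρ, fun i => ⟨lt_min (by have := hε'0 i; positivity) hρ,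
    min_le_right _ _⟩, lt_of_le_of_lt (ENNReal.tsum_le_tsum fun i => ?_) hε'⟩
  calc ENNReal.ofReal (min ((ε' i : ℝ) ^ s⁻¹) ρ) ^ s
      ≤ ENNReal.ofReal ((ε' i : ℝ) ^ s⁻¹) ^ s := by gcongr; exact min_le_left _ _
    _ = ε' i := by
      rw [ENNReal.ofReal_rpow_of_nonneg (by positivity) hs.le, ← Real.rpow_mul (by positivity),
        inv_mul_cancel₀ hs.ne', Real.rpow_one, ENNReal.ofReal_coe_nnreal]

/-- `ediam (U i)` may vanish, but covering numbers only give bounds at positive radii. -/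
theorem exists_radii_tsum_ofReal_rpow_le {X : Type*} [PseudoEMetricSpace X] {s ρ : ℝ}
    (hs : 0 < s) (hρ : 0 < ρ) {U : ℕ → Set X} (hU : ∀ i, ediam (U i) ≤ ENNReal.ofReal ρ)
    {ε : ℝ≥0∞} (hε : ε ≠ 0) :
    ∃ δ : ℕ → ℝ, (∀ i, 0 < δ i ∧ δ i ≤ ρ ∧ ediam (U i) ≤ ENNReal.ofReal (δ i)) ∧
      ∑' i, ENNReal.ofReal (δ i) ^ s ≤ ∑' i, ediam (U i) ^ s + ε := by
  obtain ⟨η, hη, hηsum⟩ := exists_pos_le_tsum_ofReal_rpow_lt hs hρ hε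
  have hUtop : ∀ i, ediam (U i) ≠ ∞ := fun i => ne_top_of_le_ne_top ENNReal.ofReal_ne_top (hU i)
  refine ⟨fun i => max (ediam (U i)).toReal (η i), fun i => ⟨lt_max_of_lt_right (hη i).1,
    max_le (ENNReal.toReal_le_of_le_ofReal hρ.le (hU i)) (hη i).2, ?_⟩, ?_⟩
  · rw [ENNReal.ofReal_max, ENNReal.ofReal_toReal (hUtop i)]
    exact le_max_left _ _
  · calc ∑' i, ENNReal.ofReal (max (ediam (U i)).toReal (η i)) ^ s
        ≤ ∑' i, (ediam (U i) ^ s + ENNReal.ofReal (η i) ^ s) := by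
          gcongr with i
          rw [ENNReal.ofReal_max, ENNReal.ofReal_toReal (hUtop i), ENNReal.max_rpow hs.le]
          exact max_le le_self_add le_add_self
      _ ≤ ∑' i, ediam (U i) ^ s + ε := by
          rw [ENNReal.tsum_add]
          gcongr

section MinkowskiSum

variable {E : Type*} [NormedAddCommGroup E]

theorem ediam_add_ball_le {U : Set E} {δ : ℝ} (hU : ediam U ≤ ENNReal.ofReal δ) (y : E) :
    ediam (U + ball y δ) ≤ ENNReal.ofReal (3 * δ) := by
  calc ediam (U + ball y δ) ≤ ediam U + ediam (ball y δ) := ediam_add_le _ _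
    _ ≤ ENNReal.ofReal δ + 2 * ENNReal.ofReal δ := by
      gcongr
      rw [← eball_ofReal]
      exact ediam_eball_le
    _ = ENNReal.ofReal (3 * δ) := by
      rw [ENNReal.ofReal_mul zero_le_three, ENNReal.ofReal_ofNat]
      ring

theorem tsum_ediam_add_ball_rpow_le {U : Set E} {S : Finset E} {s t δ : ℝ} (hst : 0 ≤ s + t)
    (hδ : 0 < δ) (hU : ediam U ≤ ENNReal.ofReal δ) (hS : (S.card : ℝ) ≤ δ ^ (-t)) :
    ∑' V : ↥(⋃ y ∈ S, {U + ball y δ}), ediam (V : Set E) ^ (s + t) ≤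
      ENNReal.ofReal (3 ^ (s + t)) * ENNReal.ofReal δ ^ s := by
  calc ∑' V : ↥(⋃ y ∈ S, {U + ball y δ}), ediam (V : Set E) ^ (s + t)
      ≤ ∑ y ∈ S, ∑' V : ({U + ball y δ} : Set (Set E)), ediam (V : Set E) ^ (s + t) :=
        ENNReal.tsum_biUnion_le (fun V => ediam V ^ (s + t)) S _
    _ = ∑ y ∈ S, ediam (U + ball y δ) ^ (s + t) :=
        Finset.sum_congr rfl fun y _ => tsum_singleton (U + ball y δ) fun V => ediam V ^ (s + t)
    _ ≤ ∑ _y ∈ S, ENNReal.ofReal (3 * δ) ^ (s + t) :=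
        Finset.sum_le_sum fun y _ => ENNReal.rpow_le_rpow (ediam_add_ball_le hU y) hst
    _ = S.card * ENNReal.ofReal ((3 * δ) ^ (s + t)) := by
        rw [Finset.sum_const, nsmul_eq_mul, ENNReal.ofReal_rpow_of_pos (by positivity)]
    _ ≤ ENNReal.ofReal (δ ^ (-t)) * ENNReal.ofReal ((3 * δ) ^ (s + t)) := by
        gcongr
        rw [← ENNReal.ofReal_natCast]
        exact ENNReal.ofReal_le_ofReal hS
    _ = ENNReal.ofReal (3 ^ (s + t)) * ENNReal.ofReal δ ^ s := by
        rw [← ENNReal.ofReal_mul (by positivity), ENNReal.ofReal_rpow_of_pos hδ,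
          ← ENNReal.ofReal_mul (by positivity), Real.mul_rpow (by norm_num) hδ.le,
          mul_left_comm, ← Real.rpow_add hδ, show -t + (s + t) = s by ring]

variable [MeasurableSpace E] [BorelSpace E]

theorem hausdorffMeasure_add_eq_zero {s t : ℝ} (hs : 0 < s) (ht : 0 ≤ t) {F G : Set E}
    (hF : μH[s] F = 0)
    (hG : ∀ᶠ δ in 𝓝[>] 0, ∃ S : Finset E, G ⊆ ⋃ y ∈ S, ball y δ ∧ (S.card : ℝ) ≤ δ ^ (-t)) :
    μH[s + t] (F + G) = 0 := by
  obtain ⟨δ₀, hδ₀ : 0 < δ₀, hG⟩ := mem_nhdsGT_iff_exists_Ioo_subset.1 hG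
  refine hausdorffMeasure_eq_zero_of_forall_countable_cover
    (C := ENNReal.ofReal (3 ^ (s + t)) * 2) (by finiteness) fun ε hε => ?_
  obtain ⟨ρ, hρ, hρδ₀, hρε⟩ : ∃ ρ > 0, ρ < δ₀ ∧ ENNReal.ofReal (3 * ρ) ≤ ε := by
    obtain ⟨r, -, hr0, hrε⟩ := ENNReal.lt_iff_exists_real_btwn.1 hε
    have hr : 0 < r := ENNReal.ofReal_pos.1 hr0
    refine ⟨min (r / 3) (δ₀ / 2), by positivity, (min_le_right _ _).trans_lt (by linarith), ?_⟩
    refine le_trans (ENNReal.ofReal_le_ofReal ?_) hrε.le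
    linarith [min_le_left (r / 3) (δ₀ / 2)]
  obtain ⟨U, hFU, hUρ, hUsum⟩ :=
    exists_cover_tsum_ediam_rpow_lt_of_hausdorffMeasure_eq_zero hs hF (ENNReal.ofReal_pos.2 hρ) hε
  obtain ⟨δ, hδ, hδsum⟩ := exists_radii_tsum_ofReal_rpow_le hs hρ hUρ hε.ne'
  choose S hGS hScard using fun i => hG ⟨(hδ i).1, (hδ i).2.1.trans_lt hρδ₀⟩
  refine ⟨⋃ i, ⋃ y ∈ S i, {U i + ball y (δ i)},
    countable_iUnion fun i => (S i).countable_toSet.biUnion fun _ _ => countable_singleton _,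
    ?_, ?_, ?_⟩
  · rintro _ ⟨a, ha, b, hb, rfl⟩
    obtain ⟨i, hai⟩ := mem_iUnion.1 (hFU ha)
    obtain ⟨y, hy, hby⟩ := mem_iUnion₂.1 (hGS i hb)
    exact mem_sUnion.2 ⟨_, mem_iUnion.2 ⟨i, mem_biUnion hy rfl⟩, add_mem_add hai hby⟩
  · simp only [mem_iUnion, mem_singleton_iff]
    rintro _ ⟨i, y, -, rfl⟩
    refine (ediam_add_ball_le (hδ i).2.2 y).trans (le_trans (ENNReal.ofReal_le_ofReal ?_) hρε)
    linarith [(hδ i).2.1]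
  · calc ∑' V : ↥(⋃ i, ⋃ y ∈ S i, {U i + ball y (δ i)}), ediam (V : Set E) ^ (s + t)
        ≤ ∑' i, ∑' V : ↥(⋃ y ∈ S i, {U i + ball y (δ i)}), ediam (V : Set E) ^ (s + t) :=
          ENNReal.tsum_iUnion_le_tsum (fun V => ediam V ^ (s + t)) _
      _ ≤ ∑' i, ENNReal.ofReal (3 ^ (s + t)) * ENNReal.ofReal (δ i) ^ s :=
          ENNReal.tsum_le_tsum fun i =>
            tsum_ediam_add_ball_rpow_le (by linarith) (hδ i).1 (hδ i).2.2 (hScard i)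
      _ ≤ ENNReal.ofReal (3 ^ (s + t)) * (∑' i, ediam (U i) ^ s + ε) := by
          rw [ENNReal.tsum_mul_left]
          gcongr
      _ ≤ ENNReal.ofReal (3 ^ (s + t)) * 2 * ε := by
          rw [mul_assoc, two_mul]
          gcongr

theorem dimH_add_le_of_eventually_cover {t : ℝ} (ht : 0 ≤ t) {F G : Set E}
    (hG : ∀ᶠ δ in 𝓝[>] 0, ∃ S : Finset E, G ⊆ ⋃ y ∈ S, ball y δ ∧ (S.card : ℝ) ≤ δ ^ (-t)) :
    dimH (F + G) ≤ dimH F + ENNReal.ofReal t := by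
  refine dimH_le fun d hd => ?_
  by_contra! hlt
  obtain ⟨s, hFs, hsd⟩ := ENNReal.lt_iff_exists_nnreal_btwn.1 (lt_tsub_iff_right.2 hlt)
  have hs : 0 < (s : ℝ) := NNReal.coe_pos.2 (ENNReal.coe_pos.1 (hFs.trans_le' zero_le))
  have hstd : (s : ℝ) + t ≤ d := by
    have := lt_tsub_iff_right.1 hsd
    rw [← ENNReal.ofReal_coe_nnreal, ← ENNReal.ofReal_add (by positivity) ht,
      ← ENNReal.ofReal_coe_nnreal, ENNReal.ofReal_lt_ofReal_iff_of_nonneg (by positivity)] at this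
    exact this.le
  have hzero := hausdorffMeasure_add_eq_zero hs ht (hausdorffMeasure_of_dimH_lt hFs) hG
  have := hzero ▸ Measure.hausdorffMeasure_mono hstd (F + G)
  simp [hd] at this

end MinkowskiSum

section CoveringNumber

variable {X : Type*} [PseudoMetricSpace X] {A : Set X} {δ : ℝ}

theorem covNum_le_card (S : Finset X) (hS : A ⊆ ⋃ y ∈ S, ball y δ) : covNum A δ ≤ S.card :=
  sInf_le ⟨S, rfl, hS⟩

theorem exists_finset_card_eq_covNum (h : covNum A δ ≠ ⊤) :
    ∃ S : Finset X, A ⊆ ⋃ y ∈ S, ball y δ ∧ (S.card : ℕ∞) = covNum A δ := by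
  have hne : {N : ℕ∞ | ∃ S : Finset X, (S.card : ℕ∞) = N ∧ A ⊆ ⋃ y ∈ S, ball y δ}.Nonempty := by
    by_contra! hempty
    exact h (by rw [covNum, hempty, sInf_empty])
  obtain ⟨S, hS, hA⟩ := csInf_mem hne
  exact ⟨S, hA, hS⟩

theorem covNum_le_packingNumber {ε : ℝ≥0} (hεδ : (ε : ℝ) < δ) (h : packingNumber ε A ≠ ⊤) :
    covNum A δ ≤ packingNumber ε A := by
  have hfin : (maximalSeparatedSet ε A).Finite :=
    Set.encard_ne_top_iff.1 (encard_maximalSeparatedSet h ▸ h)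
  rw [← encard_maximalSeparatedSet h, hfin.encard_eq_coe_toFinset_card]
  refine covNum_le_card hfin.toFinset fun x hx => ?_
  obtain ⟨y, hy, hxy⟩ := isCover_maximalSeparatedSet h hx
  refine mem_biUnion (hfin.mem_toFinset.2 hy) (mem_ball.2 (lt_of_le_of_lt ?_ hεδ))
  rw [dist_edist]
  exact ENNReal.toReal_le_of_le_ofReal ε.2 (by simpa using hxy)

theorem packingNumber_le_of_forall_card_le {ε : ℝ≥0} {M : ℕ}
    (h : ∀ P : Finset X, ↑P ⊆ A → IsSeparated ε (P : Set X) → P.card ≤ M) :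
    packingNumber ε A ≤ M := by
  refine iSup₂_le fun C hCA => iSup_le fun hC => ?_
  by_contra! hlt
  obtain ⟨P, hPC, hP⟩ := Set.exists_subset_encard_eq (Order.add_one_le_of_lt hlt)
  have hPfin : P.Finite := Set.finite_of_encard_eq_coe (k := M + 1) (by simpa using hP)
  have hcard := h hPfin.toFinset (by simpa using hPC.trans hCA) (by simpa using hC.subset hPC)
  rw [hPfin.encard_eq_coe_toFinset_card] at hP
  have : hPfin.toFinset.card = M + 1 := by exact_mod_cast hP
  omega

end CoveringNumber

section FiniteDimensional

variable {E : Type*} [NormedAddCommGroup E] [NormedSpace ℝ E] [FiniteDimensional ℝ E]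
  {A : Set E}

theorem card_le_of_isSeparated_of_subset_closedBall {P : Finset E} {R : ℝ} {ε : ℝ≥0}
    (hR : 0 ≤ R) (hε : 0 < ε) (hPR : ↑P ⊆ closedBall (0 : E) R) (hP : IsSeparated ε (P : Set E)) :
    (P.card : ℝ) ≤ ((2 * R + ε) / ε) ^ Module.finrank ℝ E := by
  borelize E
  set μ : Measure E := Measure.addHaar
  have hr : 0 < (ε : ℝ) / 2 := by positivity
  have hdisj : (P : Set E).PairwiseDisjoint fun c => ball c (ε / 2) := by
    intro c hc c' hc' hcc'
    have : (ε : ℝ≥0∞) < edist c c' := hP hc hc' hcc'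
    rw [edist_dist, ← ENNReal.ofReal_coe_nnreal] at this
    have := (ENNReal.ofReal_lt_ofReal_iff_of_nonneg ε.2).1 this
    exact ball_disjoint_ball (by rw [add_halves]; exact this.le)
  have hsub : ⋃ c ∈ P, ball c (ε / 2) ⊆ ball (0 : E) (R + ε / 2) :=
    iUnion₂_subset fun c hc => ball_subset_ball' (by linarith [mem_closedBall.1 (hPR hc)])
  have hvol : (P.card : ℝ≥0∞) * ENNReal.ofReal (((ε : ℝ) / 2) ^ Module.finrank ℝ E) *
      μ (ball 0 1) ≤ ENNReal.ofReal ((R + ε / 2) ^ Module.finrank ℝ E) * μ (ball 0 1) :=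
    calc (P.card : ℝ≥0∞) * ENNReal.ofReal (((ε : ℝ) / 2) ^ Module.finrank ℝ E) * μ (ball 0 1)
        = μ (⋃ c ∈ P, ball c (ε / 2)) := by
          rw [measure_biUnion_finset hdisj fun c _ => measurableSet_ball]
          simp only [μ.addHaar_ball_of_pos _ hr, Finset.sum_const, nsmul_eq_mul, mul_assoc]
      _ ≤ μ (ball 0 (R + ε / 2)) := measure_mono hsub
      _ = ENNReal.ofReal ((R + ε / 2) ^ Module.finrank ℝ E) * μ (ball 0 1) :=
          μ.addHaar_ball_of_pos _ (by positivity)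
  have hvol' := (ENNReal.mul_le_mul_iff_left (measure_ball_pos μ _ one_pos).ne'
    measure_ball_lt_top.ne).1 hvol
  rw [← ENNReal.ofReal_natCast, ← ENNReal.ofReal_mul (by positivity),
    ENNReal.ofReal_le_ofReal_iff (by positivity)] at hvol'
  rw [show (2 * R + ε) / ε = (R + ε / 2) / (ε / 2) by field_simp, div_pow,
    le_div_iff₀ (by positivity)]
  exact hvol'

theorem covNum_le_of_subset_closedBall {R δ : ℝ} (hR : 0 ≤ R) (hδ : 0 < δ)
    (hA : A ⊆ closedBall 0 R) : covNum A δ ≤ ⌊((4 * R + δ) / δ) ^ Module.finrank ℝ E⌋₊ := by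
  set ε : ℝ≥0 := ⟨δ / 2, by positivity⟩
  have hε : 0 < ε := NNReal.coe_pos.1 (half_pos hδ)
  have hpack : packingNumber ε A ≤ ⌊((4 * R + δ) / δ) ^ Module.finrank ℝ E⌋₊ :=
    packingNumber_le_of_forall_card_le fun P hPA hP => Nat.le_floor <|
      (card_le_of_isSeparated_of_subset_closedBall hR hε (hPA.trans hA) hP).trans_eq
        (by congr 1; change (2 * R + δ / 2) / (δ / 2) = _; field_simp; ring)
  exact (covNum_le_packingNumber (half_lt_self hδ)
    (ne_top_of_le_ne_top (ENat.natCast_ne_top _) hpack)).trans hpack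

theorem Bornology.IsBounded.isBoundedUnder_le_covNum (hA : Bornology.IsBounded A) :
    IsBoundedUnder (· ≤ ·) (𝓝[>] 0)
      fun δ => Real.log (covNum A δ).toNat / Real.log (1 / δ) := by
  obtain ⟨R, hR, hAR⟩ := hA.subset_closedBall_lt 0 0
  refine isBoundedUnder_of_eventually_le (a := 2 * Module.finrank ℝ E) ?_
  filter_upwards [Ioo_mem_nhdsGT (show (0 : ℝ) < min 1 (1 / (4 * R + 1)) by positivity)]
    with δ ⟨hδ, hδR⟩
  have hδ1 : δ < 1 := hδR.trans_le (min_le_left _ _)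
  have hL : 0 < Real.log (1 / δ) := Real.log_pos (by rw [lt_div_iff₀ hδ]; linarith)
  have hN : ((covNum A δ).toNat : ℝ) ≤ (1 / δ) ^ (2 * Module.finrank ℝ E) := by
    have h4R : 4 * R + δ ≤ 1 / δ := by
      have := (lt_div_iff₀ (by positivity)).1 (hδR.trans_le (min_le_right _ _))
      rw [le_div_iff₀ hδ]
      nlinarith
    calc ((covNum A δ).toNat : ℝ) ≤ ⌊((4 * R + δ) / δ) ^ Module.finrank ℝ E⌋₊ := by
          exact_mod_cast ENat.toNat_le_of_le_natCast (covNum_le_of_subset_closedBall hR.le hδ hAR)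
      _ ≤ ((4 * R + δ) / δ) ^ Module.finrank ℝ E := Nat.floor_le (by positivity)
      _ ≤ ((1 / δ) / δ) ^ Module.finrank ℝ E := by gcongr
      _ = (1 / δ) ^ (2 * Module.finrank ℝ E) := by rw [pow_mul]; ring
  rw [div_le_iff₀ hL]
  rcases Nat.eq_zero_or_pos (covNum A δ).toNat with h | h
  · rw [h, Nat.cast_zero, Real.log_zero]
    exact mul_nonneg (by positivity) hL.le
  · calc Real.log (covNum A δ).toNat ≤ Real.log ((1 / δ) ^ (2 * Module.finrank ℝ E)) :=
          Real.log_le_log (by exact_mod_cast h) hN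
      _ = 2 * Module.finrank ℝ E * Real.log (1 / δ) := by rw [Real.log_pow]; push_cast; ring

theorem Bornology.IsBounded.eventually_exists_finset_cover_card_le (hA : Bornology.IsBounded A)
    {t : ℝ} (ht : upperMinkDim A < t) :
    ∀ᶠ δ in 𝓝[>] 0, ∃ S : Finset E, A ⊆ ⋃ y ∈ S, ball y δ ∧ (S.card : ℝ) ≤ δ ^ (-t) := by
  obtain ⟨R, hR, hAR⟩ := hA.subset_closedBall_lt 0 0
  filter_upwards [eventually_lt_of_limsup_lt ht hA.isBoundedUnder_le_covNum,
    Ioo_mem_nhdsGT one_pos] with δ hlt ⟨hδ, hδ1⟩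
  obtain ⟨S, hAS, hS⟩ := exists_finset_card_eq_covNum
    (ne_top_of_le_ne_top (ENat.natCast_ne_top _) (covNum_le_of_subset_closedBall hR.le hδ hAR))
  refine ⟨S, hAS, ?_⟩
  rw [← hS, ENat.toNat_natCast] at hlt
  have hL : 0 < Real.log (1 / δ) := Real.log_pos (by rw [lt_div_iff₀ hδ]; linarith)
  rcases Nat.eq_zero_or_pos S.card with h | h
  · rw [h, Nat.cast_zero]
    positivity
  · refine ((Real.lt_rpow_iff_log_lt (by exact_mod_cast h) hδ).2 ?_).le
    rw [one_div, Real.log_inv] at hL hlt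
    have := (div_lt_iff₀ hL).1 hlt
    linarith

end FiniteDimensional

theorem dimH_add_le_general {n : ℕ} (F G : Set (EuclideanSpace ℝ (Fin n))) (hG : IsCompact G) :
    dimH (F + G) ≤ dimH F + ENNReal.ofReal (upperMinkDim G) := by
  set m := max (upperMinkDim G) 0
  have hlt : ∀ t > m, dimH (F + G) ≤ dimH F + ENNReal.ofReal t := fun t ht =>
    dimH_add_le_of_eventually_cover ((le_max_right _ _).trans ht.le)
      (hG.isBounded.eventually_exists_finset_cover_card_le ((le_max_left _ _).trans_lt ht))
  have hlim : Tendsto (fun t => dimH F + ENNReal.ofReal t) (𝓝[>] m)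
      (𝓝 (dimH F + ENNReal.ofReal m)) :=
    ((ENNReal.continuous_ofReal.tendsto m).mono_left nhdsWithin_le_nhds).const_add _
  have := ge_of_tendsto hlim (eventually_nhdsWithin_of_forall hlt)
  simpa [m, ENNReal.ofReal_max] using this

/-- For `F` Borel and `G` compact in `ℝⁿ`, the Hausdorff dimension of the Minkowski sum
`F + G` is at most `dim_H F + dim_M G`, where `dim_M` is the upper Minkowski dimension. -/
theorem dimH_add_le {n : ℕ} (F G : Set (EuclideanSpace ℝ (Fin n)))
    (hF : MeasurableSet F) (hG : IsCompact G) :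
    dimH (F + G) ≤ dimH F + ENNReal.ofReal (upperMinkDim G) :=
  dimH_add_le_general F G hG
end

section
/- Let V_j ⊂ ℝⁿ be a 2-dimensional subspace and, in coordinates ξ = (ξ₁, ξ₂) ∈ V_j × V_j^⊥, let Ω = {(ξ₁, ξ₂) : |ξ₁| ≥ 1, |ξ₂| ≤ log(1 + |ξ₁|)}. Let h : ℝⁿ → ℂ be a measurable function satisfying |h(ξ)| ≤ C · dist(ξ, V_j)/|ξ| for all ξ ∈ Ω (with |ξ| ≥ 1 there). Then for every s > 0, ∫_Ω |h(ξ)|² |ξ|^{−2s} dξ < ∞; i.e. the inverse Fourier transform of h·1_Ω belongs to the Sobolev space H^{−s} for every s > 0. -/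
/-!
Split `ξ = (ξ₁, ξ₂)` by the orthogonal projections onto `V` and `Vᗮ`, which is a
measure-preserving isometry. On `Ω` we have `dist(ξ, V) ≤ |ξ₂| ≤ log (1 + |ξ₁|)` and
`|ξ| ≥ |ξ₁| ≥ 1`, so the integrand is at most `C² log(1 + |ξ₁|)² |ξ₁|^(-2-2s)`. The slice of `Ω`
over `ξ₁` is a ball of radius `log (1 + |ξ₁|)` in `Vᗮ`, so by Tonelli it remains to integrate
`log(1 + |ξ₁|)^n |ξ₁|^(-2-2s)` over `|ξ₁| ≥ 1` in the plane `V`; this is finite because a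
power of a logarithm is dominated by every positive power and `2 + 2s > 2 = dim V`.
-/

open MeasureTheory Metric Module
open scoped ENNReal

theorem rpow_neg_le_two_rpow_mul_one_add_rpow_neg {a t : ℝ} (ha : 1 ≤ a) (ht : 0 ≤ t) :
    a ^ (-t) ≤ 2 ^ t * (1 + a) ^ (-t) := by
  have ha0 : 0 < a := by linarith
  calc a ^ (-t) = 2 ^ t * (2 * a) ^ (-t) := by
        rw [Real.mul_rpow (by norm_num) ha0.le, ← mul_assoc, ← Real.rpow_add (by norm_num),
          add_neg_cancel, Real.rpow_zero, one_mul]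
    _ ≤ 2 ^ t * (1 + a) ^ (-t) := by
        gcongr 2 ^ t * ?_
        exact Real.rpow_le_rpow_of_nonpos (by linarith) (by linarith) (by linarith)

theorem exists_log_one_add_pow_mul_rpow_neg_le (j : ℕ) {t t' : ℝ} (ht : 0 ≤ t) (htt' : t' < t) :
    ∃ K : ℝ, ∀ a : ℝ, 1 ≤ a → Real.log (1 + a) ^ j * a ^ (-t) ≤ K * (1 + a) ^ (-t') := by
  -- `log (1 + a) ≤ (1 + a) ^ ε / ε` trades the logarithms for a small loss `ε * j ≤ t - t'`
  set ε := (t - t') / (j + 1) with hε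
  have hε0 : 0 < ε := div_pos (by linarith) (by positivity)
  have hεj : ε * j ≤ t - t' := by
    rw [hε, div_mul_eq_mul_div, div_le_iff₀ (by positivity)]
    nlinarith
  refine ⟨2 ^ t / ε ^ j, fun a ha => ?_⟩
  have hb : 1 ≤ 1 + a := by linarith
  have hlog : Real.log (1 + a) ^ j ≤ (1 + a) ^ (ε * j) / ε ^ j := by
    rw [Real.rpow_mul (by linarith), Real.rpow_natCast, ← div_pow]
    exact pow_le_pow_left₀ (Real.log_nonneg hb) (Real.log_le_rpow_div (by linarith) hε0) j
  calc Real.log (1 + a) ^ j * a ^ (-t)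
      ≤ (1 + a) ^ (ε * j) / ε ^ j * (2 ^ t * (1 + a) ^ (-t)) :=
        mul_le_mul hlog (rpow_neg_le_two_rpow_mul_one_add_rpow_neg ha ht) (by positivity)
          (by positivity)
    _ = 2 ^ t / ε ^ j * (1 + a) ^ (ε * j + -t) := by
        rw [Real.rpow_add (by linarith)]; ring
    _ ≤ 2 ^ t / ε ^ j * (1 + a) ^ (-t') := by
        gcongr
        linarith

theorem sq_mul_rpow_neg_le {u C d L a N s : ℝ} (hu : 0 ≤ u) (huC : u ≤ C * d / N) (hd : 0 ≤ d)
    (hdL : d ≤ L) (ha : 0 < a) (haN : a ≤ N) (hs : 0 ≤ s) :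
    u ^ 2 * N ^ (-(2 * s)) ≤ C ^ 2 * (L ^ 2 * a ^ (-(2 + 2 * s))) := by
  have hN : 0 < N := ha.trans_le haN
  have hu' : u ≤ |C| * L / a := by
    calc u ≤ C * d / N := huC
      _ ≤ |C| * d / N := by gcongr; exact le_abs_self C
      _ ≤ |C| * L / a := by gcongr; exact mul_nonneg (abs_nonneg C) (hd.trans hdL)
  have hsq : u ^ 2 ≤ C ^ 2 * L ^ 2 / a ^ 2 := by
    calc u ^ 2 ≤ (|C| * L / a) ^ 2 := pow_le_pow_left₀ hu hu' 2
      _ = C ^ 2 * L ^ 2 / a ^ 2 := by rw [div_pow, mul_pow, sq_abs]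
  have hsplit : a ^ (-(2 + 2 * s)) = a ^ (-(2 * s)) / a ^ 2 := by
    rw [neg_add, Real.rpow_add ha, Real.rpow_neg ha.le, ← div_eq_inv_mul,
      Real.rpow_two, div_eq_mul_inv, mul_comm]
  calc u ^ 2 * N ^ (-(2 * s)) ≤ C ^ 2 * L ^ 2 / a ^ 2 * a ^ (-(2 * s)) :=
        mul_le_mul hsq (Real.rpow_le_rpow_of_nonpos ha haN (by linarith)) (by positivity)
          (by positivity)
    _ = C ^ 2 * (L ^ 2 * a ^ (-(2 + 2 * s))) := by rw [hsplit]; ring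

def logRegion (E F : Type*) [Norm E] [Norm F] : Set (E × F) :=
  {p | 1 ≤ ‖p.1‖ ∧ ‖p.2‖ ≤ Real.log (1 + ‖p.1‖)}

theorem measurableSet_logRegion {E F : Type*} [NormedAddCommGroup E] [MeasurableSpace E]
    [OpensMeasurableSpace E] [NormedAddCommGroup F] [MeasurableSpace F] [OpensMeasurableSpace F] :
    MeasurableSet (logRegion E F) := by
  rw [logRegion, Set.ofPred_and]
  exact (measurableSet_le measurable_const (by fun_prop)).inter
    (measurableSet_le (by fun_prop) (by fun_prop))

section LogRegion

variable {E F : Type*} [NormedAddCommGroup E] [NormedAddCommGroup F] [NormedSpace ℝ F]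
  [FiniteDimensional ℝ F] [MeasurableSpace F] [BorelSpace F]

theorem lintegral_indicator_logRegion_prodMk_le (ν : Measure F) [ν.IsAddHaarMeasure]
    (g : E → ℝ≥0∞) (x : E) :
    ∫⁻ y, (logRegion E F).indicator (fun p => g p.1) (x, y) ∂ν ≤
      {x : E | 1 ≤ ‖x‖}.indicator
        (fun x => g x * ENNReal.ofReal (Real.log (1 + ‖x‖) ^ finrank ℝ F) * ν (ball 0 1)) x := by
  by_cases hx : 1 ≤ ‖x‖
  · have hslice : (fun y => (logRegion E F).indicator (fun p => g p.1) (x, y)) =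
        (closedBall (0 : F) (Real.log (1 + ‖x‖))).indicator (fun _ => g x) := by
      ext y
      simp [logRegion, Set.indicator, hx]
    rw [hslice, lintegral_indicator_const measurableSet_closedBall,
      Measure.addHaar_closedBall _ _ (Real.log_nonneg (by linarith)),
      Set.indicator_of_mem (show x ∈ {x : E | 1 ≤ ‖x‖} from hx), mul_assoc]
  · have hslice : (fun y => (logRegion E F).indicator (fun p => g p.1) (x, y)) = 0 := by
      ext y
      simp [logRegion, Set.indicator, hx]
    rw [hslice, lintegral_zero_fun]
    exact zero_le

theorem lintegral_logRegion_lt_top [NormedSpace ℝ E] [FiniteDimensional ℝ E]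
    [MeasurableSpace E] [BorelSpace E] (μ : Measure E) [μ.IsAddHaarMeasure] (ν : Measure F)
    [ν.IsAddHaarMeasure] (k : ℕ) {t : ℝ} (ht : finrank ℝ E < t) :
    ∫⁻ p in logRegion E F, ENNReal.ofReal (Real.log (1 + ‖p.1‖) ^ k * ‖p.1‖ ^ (-t))
      ∂μ.prod ν < ∞ := by
  obtain ⟨t', ht'E, ht't⟩ := exists_between ht
  obtain ⟨K, hK⟩ := exists_log_one_add_pow_mul_rpow_neg_le (k + finrank ℝ F)
    ((Nat.cast_nonneg _).trans ht.le) ht't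
  have hpoint : ∀ x : E, {x : E | 1 ≤ ‖x‖}.indicator (fun x =>
      ENNReal.ofReal (Real.log (1 + ‖x‖) ^ k * ‖x‖ ^ (-t)) *
        ENNReal.ofReal (Real.log (1 + ‖x‖) ^ finrank ℝ F) * ν (ball 0 1)) x ≤
      ENNReal.ofReal (K * (1 + ‖x‖) ^ (-t')) * ν (ball 0 1) := by
    intro x
    by_cases hx : 1 ≤ ‖x‖
    · have hL : 0 ≤ Real.log (1 + ‖x‖) := Real.log_nonneg (by linarith)
      rw [Set.indicator_of_mem (show x ∈ {x : E | 1 ≤ ‖x‖} from hx),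
        ← ENNReal.ofReal_mul (mul_nonneg (pow_nonneg hL k) (Real.rpow_nonneg (norm_nonneg x) _))]
      gcongr ENNReal.ofReal ?_ * _
      calc Real.log (1 + ‖x‖) ^ k * ‖x‖ ^ (-t) * Real.log (1 + ‖x‖) ^ finrank ℝ F
          = Real.log (1 + ‖x‖) ^ (k + finrank ℝ F) * ‖x‖ ^ (-t) := by ring
        _ ≤ K * (1 + ‖x‖) ^ (-t') := hK _ hx
    · simp [hx]
  have hint : Integrable (fun x : E => K * (1 + ‖x‖) ^ (-t')) μ :=
    (integrable_one_add_norm ht'E).const_mul K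
  calc ∫⁻ p in logRegion E F, ENNReal.ofReal (Real.log (1 + ‖p.1‖) ^ k * ‖p.1‖ ^ (-t))
        ∂μ.prod ν
      = ∫⁻ p, (logRegion E F).indicator
          (fun p => ENNReal.ofReal (Real.log (1 + ‖p.1‖) ^ k * ‖p.1‖ ^ (-t))) p ∂μ.prod ν :=
        (lintegral_indicator measurableSet_logRegion _).symm
    _ ≤ ∫⁻ x, ∫⁻ y, (logRegion E F).indicator
          (fun p => ENNReal.ofReal (Real.log (1 + ‖p.1‖) ^ k * ‖p.1‖ ^ (-t))) (x, y) ∂ν ∂μ :=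
        lintegral_prod_le _
    _ ≤ ∫⁻ x, ENNReal.ofReal (K * (1 + ‖x‖) ^ (-t')) * ν (ball 0 1) ∂μ :=
        lintegral_mono fun x => (lintegral_indicator_logRegion_prodMk_le ν _ x).trans (hpoint x)
    _ = (∫⁻ x, ENNReal.ofReal (K * (1 + ‖x‖) ^ (-t')) ∂μ) * ν (ball 0 1) :=
        lintegral_mul_const' _ _ measure_ball_lt_top.ne
    _ < ∞ := ENNReal.mul_lt_top hint.lintegral_lt_top measure_ball_lt_top

end LogRegion

theorem Submodule.measurePreserving_orthogonalProjectionOnto_prod {E : Type*}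
    [NormedAddCommGroup E] [InnerProductSpace ℝ E] [FiniteDimensional ℝ E] [MeasurableSpace E]
    [BorelSpace E] (K : Submodule ℝ E) :
    MeasurePreserving (fun ξ => (K.orthogonalProjectionOnto ξ, Kᗮ.orthogonalProjectionOnto ξ)) := by
  convert (WithLp.volume_preserving_ofLp K Kᗮ).comp K.orthogonalDecomposition.measurePreserving
    using 1
  funext ξ
  simp only [Function.comp_apply, Submodule.orthogonalDecomposition_apply, WithLp.ofLp_toLp]

theorem log_region_sobolev_general {n : ℕ}
    (V : Submodule ℝ (EuclideanSpace ℝ (Fin n))) (hV : Module.finrank ℝ V = 2)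
    (h : EuclideanSpace ℝ (Fin n) → ℂ) (C : ℝ)
    (Ω : Set (EuclideanSpace ℝ (Fin n)))
    (hΩ : Ω = {ξ : EuclideanSpace ℝ (Fin n) |
      1 ≤ ‖((Submodule.orthogonalProjectionOnto V) ξ : EuclideanSpace ℝ (Fin n))‖ ∧
      ‖ξ - ((Submodule.orthogonalProjectionOnto V) ξ : EuclideanSpace ℝ (Fin n))‖ ≤
        Real.log (1 + ‖((Submodule.orthogonalProjectionOnto V) ξ : EuclideanSpace ℝ (Fin n))‖)})
    (hbound : ∀ ξ ∈ Ω, ‖h ξ‖ ≤ C * infDist ξ (V : Set (EuclideanSpace ℝ (Fin n))) / ‖ξ‖) :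
    ∀ s : ℝ, 0 < s →
      ∫⁻ ξ in Ω, ENNReal.ofReal (‖h ξ‖ ^ 2 * ‖ξ‖ ^ (-(2 * s))) ∂volume < ⊤ := by
  intro s hs
  set Φ := fun ξ => (V.orthogonalProjectionOnto ξ, Vᗮ.orthogonalProjectionOnto ξ)
  set G : V × Vᗮ → ℝ≥0∞ := fun p =>
    ENNReal.ofReal (C ^ 2) * ENNReal.ofReal (Real.log (1 + ‖p.1‖) ^ 2 * ‖p.1‖ ^ (-(2 + 2 * s)))
  have hΩΦ : Ω = Φ ⁻¹' logRegion V Vᗮ := by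
    simp [hΩ, Φ, logRegion, Submodule.orthogonalProjectionOnto_orthogonal]
  have hpoint : ∀ ξ ∈ Ω, ENNReal.ofReal (‖h ξ‖ ^ 2 * ‖ξ‖ ^ (-(2 * s))) ≤ G (Φ ξ) := by
    intro ξ hξ
    obtain ⟨hone, hlog⟩ := hΩ ▸ hξ
    have hdist : infDist ξ V ≤ ‖ξ - V.orthogonalProjectionOnto ξ‖ :=
      (infDist_le_dist_of_mem (V.orthogonalProjectionOnto ξ).2).trans_eq (dist_eq_norm _ _)
    rw [show G (Φ ξ) = _ from (ENNReal.ofReal_mul (sq_nonneg C)).symm]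
    exact ENNReal.ofReal_le_ofReal <| sq_mul_rpow_neg_le (norm_nonneg _) (hbound ξ hξ)
      infDist_nonneg (hdist.trans hlog) (zero_lt_one.trans_le hone)
      (V.norm_orthogonalProjectionOnto_apply_le ξ) hs.le
  calc ∫⁻ ξ in Ω, ENNReal.ofReal (‖h ξ‖ ^ 2 * ‖ξ‖ ^ (-(2 * s)))
      ≤ ∫⁻ ξ in Φ ⁻¹' logRegion V Vᗮ, G (Φ ξ) := hΩΦ ▸ setLIntegral_mono (by fun_prop) hpoint
    _ = ∫⁻ p in logRegion V Vᗮ, G p :=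
      V.measurePreserving_orthogonalProjectionOnto_prod.setLIntegral_comp_preimage
        measurableSet_logRegion (by fun_prop)
    _ < ⊤ := by
      refine (lintegral_const_mul' _ _ ENNReal.ofReal_ne_top).trans_lt
        (ENNReal.mul_lt_top ENNReal.ofReal_lt_top ?_)
      exact lintegral_logRegion_lt_top volume volume 2 (by rw [hV]; push_cast; linarith)

/-- Let `V` be a 2-dimensional subspace of `ℝⁿ` and, in the coordinates
`ξ = (ξ₁, ξ₂) ∈ V × V^⊥`, let `Ω = {|ξ₁| ≥ 1, |ξ₂| ≤ log(1+|ξ₁|)}`. If `h` is measurable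
with `|h(ξ)| ≤ C · dist(ξ, V)/|ξ|` on `Ω`, then `∫_Ω |h|² |ξ|^{-2s} dξ < ∞` for every
`s > 0`, i.e. the inverse Fourier transform of `h·1_Ω` lies in `H^{-s}` for all `s > 0`. -/
theorem log_region_sobolev {n : ℕ}
    (V : Submodule ℝ (EuclideanSpace ℝ (Fin n))) (hV : Module.finrank ℝ V = 2)
    (h : EuclideanSpace ℝ (Fin n) → ℂ) (hmeas : Measurable h) (C : ℝ)
    (Ω : Set (EuclideanSpace ℝ (Fin n)))
    (hΩ : Ω = {ξ : EuclideanSpace ℝ (Fin n) |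
      1 ≤ ‖((Submodule.orthogonalProjectionOnto V) ξ : EuclideanSpace ℝ (Fin n))‖ ∧
      ‖ξ - ((Submodule.orthogonalProjectionOnto V) ξ : EuclideanSpace ℝ (Fin n))‖ ≤
        Real.log (1 + ‖((Submodule.orthogonalProjectionOnto V) ξ : EuclideanSpace ℝ (Fin n))‖)})
    (hbound : ∀ ξ ∈ Ω, ‖h ξ‖ ≤ C * infDist ξ (V : Set (EuclideanSpace ℝ (Fin n))) / ‖ξ‖) :
    ∀ s : ℝ, 0 < s →
      ∫⁻ ξ in Ω, ENNReal.ofReal (‖h ξ‖ ^ 2 * ‖ξ‖ ^ (-(2 * s))) ∂volume < ⊤ :=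
  log_region_sobolev_general V hV h C Ω hΩ hbound
end
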